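/- Let s be a nonnegative generalized n-series over ℤ. Then for all m > 0 and n ≥ k ≥ 0, binom(nm, km)_s ≡ binom(n,k)_{s_m} (mod Φ_m(s)), where s_m(j) = s(mj) and Φ_m(s) = ∏_{d ∣ m} s(d)^{μ(m/d)}. -/

import Mathlib

/-!
Fix a prime `p` and put `v = v_p(Φ_m(s))`. Since `s` is a strong divisibility sequence,
`d ↦ v_p(s d)` turns `gcd` into `min`; its level sets among the divisors of `m` are then the
multiples of a single divisor, and Möbius inversion gives
`v = v_p(s m) - max_{d ∣ m, d < m} v_p(s d)`. Hence `p ^ (v_p(s r) + v) ∣ s m ∣ s (j m + r) - s r`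
for `0 < r < m` (when `v > 0`), i.e. `s (j m + r) / s r ≡ 1 (mod p ^ v)` in `ℤ_(p)`.
Write `(t m)!_s = t!_{s_m} · N t`, where `N t` collects the factors `s i` with `m ∤ i`.
The two binomial identities give `N k · N (n - k) · B = N n · B'`, and both `N k · N (n - k)`
and `N n` are `≡ (N 1) ^ n` in the above relative sense, so `p ^ v ∣ B - B'`.
-/

open Finset in
/-- `b` is the s-binomial coefficient `binom(n,k)_s` (with the convention that it is
`0` when `k > n`): `k!_s (n-k)!_s · b = n!_s`. -/
def IsSBinom (s : ℕ → ℤ) (n k : ℕ) (b : ℤ) : Prop :=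
  if k ≤ n then
    (∏ i ∈ range k, s (i + 1)) * (∏ i ∈ range (n - k), s (i + 1)) * b
      = ∏ i ∈ range n, s (i + 1)
  else b = 0

open Finset ArithmeticFunction ArithmeticFunction.Moebius

theorem sum_moebius_div_mul_ite_dvd {m : ℕ} (hm : 0 < m) (g : ℕ) :
    ∑ d ∈ m.divisors, (μ (m / d) : ℤ) * (if g ∣ d then 1 else 0)
      = if g = m then 1 else 0 := by
  have hinv := (sum_eq_iff_sum_mul_moebius_eq (f := fun i : ℕ => if g = i then (1 : ℤ) else 0)
    (g := fun n => if g ∣ n then 1 else 0)).1 fun n hn => by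
      simp [Finset.sum_ite_eq, hn.ne']
  rw [← Nat.sum_divisorsAntidiagonal' fun a b => (μ a : ℤ) * if g ∣ b then 1 else 0]
  exact hinv m hm

section GcdMin

variable {f : ℕ → ℕ}

theorem apply_le_apply_of_dvd (hf : ∀ a b, 0 < a → 0 < b → f (a.gcd b) = min (f a) (f b))
    {a b : ℕ} (ha : 0 < a) (hb : 0 < b) (hab : a ∣ b) : f a ≤ f b := by
  have := hf a b ha hb
  rw [Nat.gcd_eq_left hab] at this
  omega

theorem exists_dvd_iff_lt_apply (hf : ∀ a b, 0 < a → 0 < b → f (a.gcd b) = min (f a) (f b))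
    {m x : ℕ} (hm : 0 < m) (hx : x < f m) :
    ∃ g, ∀ d ∈ m.divisors, x < f d ↔ g ∣ d := by
  set T := {d ∈ m.divisors | x < f d}
  have hT : T.Nonempty := ⟨m, by simp [T, hm.ne', hx]⟩
  obtain ⟨hgm, hxg⟩ := mem_filter.1 (T.min'_mem hT)
  have hg := Nat.pos_of_mem_divisors hgm
  refine ⟨T.min' hT, fun d hd => ⟨fun hxd => ?_, fun hgd => ?_⟩⟩
  · -- the least element of `T` divides every element, as `T` is closed under `gcd`
    have hd0 := Nat.pos_of_mem_divisors hd
    have hgcd : (T.min' hT).gcd d ∈ T := by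
      refine mem_filter.2 ⟨Nat.mem_divisors.2 ⟨(Nat.gcd_dvd_left _ _).trans
        (Nat.dvd_of_mem_divisors hgm), hm.ne'⟩, ?_⟩
      rw [hf _ _ hg hd0]
      exact lt_min hxg hxd
    have := T.min'_le _ hgcd
    rw [← Nat.gcd_eq_left_iff_dvd]
    exact le_antisymm (Nat.le_of_dvd hg (Nat.gcd_dvd_left _ _)) this
  · exact hxg.trans_le (apply_le_apply_of_dvd hf hg (Nat.pos_of_mem_divisors hd) hgd)

theorem sum_moebius_div_mul_ite_lt_apply
    (hf : ∀ a b, 0 < a → 0 < b → f (a.gcd b) = min (f a) (f b))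
    {m x : ℕ} (hm : 0 < m) (hx : x < f m) :
    ∑ d ∈ m.divisors, (μ (m / d) : ℤ) * (if x < f d then 1 else 0)
      = if m.properDivisors.sup f ≤ x then 1 else 0 := by
  obtain ⟨g, hg⟩ := exists_dvd_iff_lt_apply hf hm hx
  have hgm : g ∣ m := (hg m (Nat.mem_divisors_self m hm.ne')).1 hx
  rw [sum_congr rfl fun d hd => by rw [if_congr (hg d hd) rfl rfl],
    sum_moebius_div_mul_ite_dvd hm]
  congr 1
  refine propext ⟨?_, fun hw => ?_⟩
  · rintro rfl
    refine Finset.sup_le_iff.2 fun d hd => not_lt.1 fun hxd => ?_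
    obtain ⟨hdg, hdm⟩ := Nat.mem_properDivisors.1 hd
    have := Nat.le_of_dvd (Nat.pos_of_dvd_of_pos hdg hm)
      ((hg d (Nat.mem_divisors.2 ⟨hdg, hm.ne'⟩)).1 hxd)
    omega
  · by_contra hne
    have hxg := (hg g (Nat.mem_divisors.2 ⟨hgm, hm.ne'⟩)).2 dvd_rfl
    have := Finset.le_sup (f := f)
      (Nat.mem_properDivisors.2 ⟨hgm, lt_of_le_of_ne (Nat.le_of_dvd hm hgm) hne⟩)
    omega

theorem sum_moebius_div_mul_apply
    (hf : ∀ a b, 0 < a → 0 < b → f (a.gcd b) = min (f a) (f b)) {m : ℕ} (hm : 0 < m) :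
    ∑ d ∈ m.divisors, (μ (m / d) : ℤ) * f d = f m - m.properDivisors.sup f := by
  have hle : ∀ d ∈ m.divisors, f d ≤ f m := fun d hd =>
    apply_le_apply_of_dvd hf (Nat.pos_of_mem_divisors hd) hm (Nat.dvd_of_mem_divisors hd)
  have hw : m.properDivisors.sup f ≤ f m := Finset.sup_le fun d hd =>
    hle d (Nat.mem_divisors.2 ⟨(Nat.mem_properDivisors.1 hd).1, hm.ne'⟩)
  -- layer-cake decomposition `f d = #{x < f m | x < f d}`
  have hlayer : ∀ d ∈ m.divisors,
      (f d : ℤ) = ∑ x ∈ range (f m), if x < f d then 1 else 0 := by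
    intro d hd
    have : {x ∈ range (f m) | x < f d} = range (f d) := by
      ext x
      simp only [mem_filter, mem_range]
      have := hle d hd
      omega
    rw [sum_boole, this, card_range]
  have htop :
      {x ∈ range (f m) | m.properDivisors.sup f ≤ x} = Ico (m.properDivisors.sup f) (f m) := by
    ext x
    simp only [mem_filter, mem_range, mem_Ico]
    omega
  calc ∑ d ∈ m.divisors, (μ (m / d) : ℤ) * f d
      = ∑ x ∈ range (f m), ∑ d ∈ m.divisors, (μ (m / d) : ℤ) * (if x < f d then 1 else 0) := by
        rw [sum_comm]
        exact sum_congr rfl fun d hd => by rw [hlayer d hd, mul_sum]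
    _ = ∑ x ∈ range (f m), if m.properDivisors.sup f ≤ x then 1 else 0 :=
        sum_congr rfl fun x hx => sum_moebius_div_mul_ite_lt_apply hf hm (mem_range.1 hx)
    _ = f m - m.properDivisors.sup f := by
        rw [sum_boole, htop, Nat.card_Ico, Nat.cast_sub hw]

end GcdMin

theorem le_padicValInt_of_pow_dvd {p n : ℕ} [Fact p.Prime] {z : ℤ} (hz : z ≠ 0)
    (h : (p : ℤ) ^ n ∣ z) : n ≤ padicValInt p z :=
  ((padicValInt_dvd_iff n z).1 h).resolve_left hz

theorem padicValRat_prod (p : ℕ) [Fact p.Prime] {ι : Type*} (t : Finset ι) {f : ι → ℚ}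
    (hf : ∀ i ∈ t, f i ≠ 0) : padicValRat p (∏ i ∈ t, f i) = ∑ i ∈ t, padicValRat p (f i) := by
  induction t using Finset.cons_induction with
  | empty => simp
  | cons i t hi ih =>
    have hft : ∀ j ∈ t, f j ≠ 0 := fun j hj => hf j (mem_cons_of_mem hj)
    rw [prod_cons, sum_cons, padicValRat.mul (hf i (mem_cons_self i t)) (prod_ne_zero_iff.2 hft),
      ih hft]

theorem dvd_of_forall_pow_padicValInt_dvd {a b : ℤ} (ha : a ≠ 0)
    (h : ∀ p : ℕ, p.Prime → (p : ℤ) ^ padicValInt p a ∣ b) : a ∣ b := by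
  rw [← Int.natAbs_dvd_natAbs, Nat.dvd_iff_prime_pow_dvd_dvd]
  intro p k hp hpk
  have : Fact p.Prime := ⟨hp⟩
  have hk : k ≤ padicValInt p a :=
    le_padicValInt_of_pow_dvd ha (by exact_mod_cast Int.natCast_dvd.2 hpk)
  exact Int.natCast_dvd.1 (by exact_mod_cast (pow_dvd_pow _ hk).trans (h p hp))

/-- `x / y ≡ 1 (mod p ^ v)` in `ℤ_(p)`. -/
def RelModEq (p v : ℕ) (x y : ℤ) : Prop :=
  y ≠ 0 ∧ x ≡ y [ZMOD p ^ (padicValInt p y + v)]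

namespace RelModEq

variable {p v : ℕ}

theorem refl {y : ℤ} (hy : y ≠ 0) : RelModEq p v y y := ⟨hy, Int.ModEq.refl y⟩

variable [Fact p.Prime]

theorem mul {x x' y y' : ℤ} (h : RelModEq p v x y) (h' : RelModEq p v x' y') :
    RelModEq p v (x * x') (y * y') := by
  obtain ⟨hy, hxy⟩ := h
  obtain ⟨hy', hxy'⟩ := h'
  refine ⟨mul_ne_zero hy hy', ?_⟩
  set a := padicValInt p y
  set a' := padicValInt p y'
  have hx' : (p : ℤ) ^ a' ∣ x' :=
    ((hxy'.of_dvd (pow_dvd_pow _ (Nat.le_add_right a' v))).dvd_iff).2 (padicValInt_dvd y')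
  rw [padicValInt.mul hy hy']
  calc x * x' ≡ y * x' [ZMOD p ^ (a + a' + v)] :=
        (hxy.mul_right' (c := x')).of_dvd (by
          rw [show a + a' + v = (a + v) + a' by ring, pow_add]
          exact mul_dvd_mul_left _ hx')
    _ ≡ y * y' [ZMOD p ^ (a + a' + v)] :=
        (hxy'.mul_left' (c := y)).of_dvd (by
          rw [add_assoc, pow_add]
          exact mul_dvd_mul_right (padicValInt_dvd y) _)

theorem prod {ι : Type*} (t : Finset ι) {f g : ι → ℤ}
    (h : ∀ i ∈ t, RelModEq p v (f i) (g i)) :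
    RelModEq p v (∏ i ∈ t, f i) (∏ i ∈ t, g i) := by
  induction t using Finset.cons_induction with
  | empty => exact refl one_ne_zero
  | cons i t hi ih =>
    rw [prod_cons, prod_cons]
    exact (h i (mem_cons_self i t)).mul (ih fun j hj => h j (mem_cons_of_mem hj))

theorem pow_dvd_of_pow_padicValInt_add_dvd_mul {y z : ℤ} (hy : y ≠ 0)
    (h : (p : ℤ) ^ (padicValInt p y + v) ∣ y * z) : (p : ℤ) ^ v ∣ z := by
  rcases eq_or_ne z 0 with rfl | hz
  · exact dvd_zero _
  have := le_padicValInt_of_pow_dvd (mul_ne_zero hy hz) h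
  rw [padicValInt.mul hy hz] at this
  exact (pow_dvd_pow _ (by omega)).trans (padicValInt_dvd z)

theorem pow_dvd_sub_of_mul_eq {x x' y z z' : ℤ} (h : RelModEq p v x y)
    (h' : RelModEq p v x' y) (hxz : x * z = x' * z') : (p : ℤ) ^ v ∣ z - z' := by
  refine pow_dvd_of_pow_padicValInt_add_dvd_mul h.1 ?_
  have hyz : y * z ≡ y * z' [ZMOD p ^ (padicValInt p y + v)] :=
    calc y * z ≡ x * z [ZMOD p ^ (padicValInt p y + v)] := h.2.symm.mul_right z
      _ = x' * z' := hxz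
      _ ≡ y * z' [ZMOD p ^ (padicValInt p y + v)] := h'.2.mul_right z'
  rw [mul_sub]
  exact hyz.symm.dvd

end RelModEq

section DivisibilitySequence

variable {s : ℕ → ℤ}

theorem dvd_apply_add_sub (h0 : s 0 = 0)
    (hdvd : ∀ n k : ℕ, 0 < k → k < n → s (n - k) ∣ s n - s k) (a b : ℕ) :
    s a ∣ s (a + b) - s b := by
  rcases Nat.eq_zero_or_pos a with rfl | ha
  · simp
  rcases Nat.eq_zero_or_pos b with rfl | hb
  · simp [h0]
  simpa using hdvd (a + b) b hb (by omega)

theorem dvd_apply_mul_add_sub (hs : ∀ a b, s a ∣ s (a + b) - s b) (a j r : ℕ) :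
    s a ∣ s (a * j + r) - s r := by
  induction j with
  | zero => simp
  | succ j ih =>
    have := dvd_add (hs a (a * j + r)) ih
    rwa [sub_add_sub_cancel, ← add_assoc, add_comm a, ← mul_add_one] at this

theorem apply_dvd_apply_of_dvd (h0 : s 0 = 0) (hs : ∀ a b, s a ∣ s (a + b) - s b)
    {a b : ℕ} (hab : a ∣ b) : s a ∣ s b := by
  obtain ⟨j, rfl⟩ := hab
  simpa [h0] using dvd_apply_mul_add_sub hs a j 0

theorem dvd_apply_gcd (hs : ∀ a b, s a ∣ s (a + b) - s b) {N : ℤ} (a b : ℕ)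
    (ha : N ∣ s a) (hb : N ∣ s b) : N ∣ s (a.gcd b) := by
  induction a, b using Nat.gcd.induction with
  | H0 n => simpa using hb
  | H1 a b _ ih =>
    rw [Nat.gcd_rec]
    refine ih ?_ ha
    have := ha.trans (dvd_apply_mul_add_sub hs a (b / a) (b % a))
    rw [Nat.div_add_mod] at this
    simpa using dvd_sub hb this

theorem padicValInt_apply_gcd (p : ℕ) [Fact p.Prime] (h0 : s 0 = 0)
    (hs : ∀ a b, s a ∣ s (a + b) - s b) (hne : ∀ n : ℕ, 0 < n → 0 < s n)
    {a b : ℕ} (ha : 0 < a) (hb : 0 < b) :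
    padicValInt p (s (a.gcd b)) = min (padicValInt p (s a)) (padicValInt p (s b)) := by
  have hmono {c d : ℕ} (hd : 0 < d) (hcd : c ∣ d) : padicValInt p (s c) ≤ padicValInt p (s d) :=
    le_padicValInt_of_pow_dvd (hne d hd).ne'
      ((padicValInt_dvd _).trans (apply_dvd_apply_of_dvd h0 hs hcd))
  refine le_antisymm
    (le_min (hmono ha (Nat.gcd_dvd_left a b)) (hmono hb (Nat.gcd_dvd_right a b))) ?_
  refine le_padicValInt_of_pow_dvd (hne _ (Nat.gcd_pos_of_pos_left b ha)).ne' ?_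
  exact dvd_apply_gcd hs a b
    ((pow_dvd_pow _ (min_le_left _ _)).trans (padicValInt_dvd (p := p) (s a)))
    ((pow_dvd_pow _ (min_le_right _ _)).trans (padicValInt_dvd (p := p) (s b)))

end DivisibilitySequence

/-- `∏_{0 < i ≤ t m, m ∤ i} s i`, the part of `(t m)!_s` that `t!_{s_m}` misses. -/
def nonMultiplesProd (s : ℕ → ℤ) (m t : ℕ) : ℤ :=
  ∏ j ∈ range t, ∏ r ∈ range (m - 1), s (m * j + r + 1)

section SLucas

variable {s : ℕ → ℤ}

theorem prod_range_mul_eq_mul_nonMultiplesProd {m : ℕ} (hm : 0 < m) (t : ℕ) :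
    ∏ i ∈ range (t * m), s (i + 1)
      = (∏ i ∈ range t, s (m * (i + 1))) * nonMultiplesProd s m t := by
  obtain ⟨m, rfl⟩ := Nat.exists_eq_add_one_of_ne_zero hm.ne'
  induction t with
  | zero => simp [nonMultiplesProd]
  | succ t ih =>
    rw [add_one_mul, prod_range_add, ih]
    simp only [nonMultiplesProd, prod_range_succ, Nat.add_sub_cancel]
    rw [show t * (m + 1) + m + 1 = (m + 1) * (t + 1) by ring, mul_comm t]
    ring

theorem mul_eq_of_isSBinom (hne : ∀ n : ℕ, 0 < n → 0 < s n) {m n k : ℕ} (hm : 0 < m)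
    (hk : k ≤ n) {B B' : ℤ} (hB : IsSBinom s (n * m) (k * m) B)
    (hB' : IsSBinom (fun j => s (m * j)) n k B') :
    nonMultiplesProd s m k * nonMultiplesProd s m (n - k) * B = nonMultiplesProd s m n * B' := by
  rw [IsSBinom, if_pos (Nat.mul_le_mul_right m hk), ← Nat.sub_mul,
    prod_range_mul_eq_mul_nonMultiplesProd hm, prod_range_mul_eq_mul_nonMultiplesProd hm,
    prod_range_mul_eq_mul_nonMultiplesProd hm] at hB
  rw [IsSBinom, if_pos hk] at hB'
  have hF : ∀ t, ∏ i ∈ range t, s (m * (i + 1)) ≠ 0 := fun t =>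
    prod_ne_zero_iff.2 fun i _ => (hne _ (by positivity)).ne'
  refine mul_left_cancel₀ (mul_ne_zero (hF k) (hF (n - k))) ?_
  linear_combination hB - nonMultiplesProd s m n * hB'

theorem phi_ne_zero (hne : ∀ n : ℕ, 0 < n → 0 < s n) {m : ℕ} {Φ : ℤ}
    (hΦ : (Φ : ℚ) = ∏ e ∈ m.divisors, (s e : ℚ) ^ (μ (m / e))) : Φ ≠ 0 := by
  refine fun h => prod_ne_zero_iff.2 (fun d hd => zpow_ne_zero _ ?_) (h ▸ hΦ).symm
  exact_mod_cast (hne d (Nat.pos_of_mem_divisors hd)).ne'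

variable (p : ℕ) [Fact p.Prime]

theorem relModEq_nonMultiplesProd (hs : ∀ a b, s a ∣ s (a + b) - s b)
    (hne : ∀ n : ℕ, 0 < n → 0 < s n) {m v : ℕ}
    (hsm : ∀ r, 0 < r → r < m → (p : ℤ) ^ (padicValInt p (s r) + v) ∣ s m) (t : ℕ) :
    RelModEq p v (nonMultiplesProd s m t) (nonMultiplesProd s m 1 ^ t) := by
  have hR : nonMultiplesProd s m 1 ^ t = ∏ _j ∈ range t, ∏ r ∈ range (m - 1), s (r + 1) := by
    simp [nonMultiplesProd]
  rw [hR, nonMultiplesProd]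
  refine RelModEq.prod _ fun j _ => RelModEq.prod _ fun r hr => ⟨(hne _ r.succ_pos).ne', ?_⟩
  rw [add_assoc]
  refine (Int.modEq_of_dvd ?_).symm
  exact (hsm (r + 1) r.succ_pos (by have := mem_range.1 hr; omega)).trans
    (dvd_apply_mul_add_sub hs m j (r + 1))

theorem padicValInt_phi (h0 : s 0 = 0) (hs : ∀ a b, s a ∣ s (a + b) - s b)
    (hne : ∀ n : ℕ, 0 < n → 0 < s n) {m : ℕ} (hm : 0 < m) {Φ : ℤ}
    (hΦ : (Φ : ℚ) = ∏ e ∈ m.divisors, (s e : ℚ) ^ (μ (m / e))) :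
    (padicValInt p Φ : ℤ)
      = padicValInt p (s m) - m.properDivisors.sup fun d => padicValInt p (s d) := by
  have hs0 : ∀ d ∈ m.divisors, (s d : ℚ) ≠ 0 := fun d hd => by
    exact_mod_cast (hne d (Nat.pos_of_mem_divisors hd)).ne'
  refine Eq.trans ?_ (sum_moebius_div_mul_apply (f := fun d => padicValInt p (s d))
    (fun a b => padicValInt_apply_gcd p h0 hs hne) hm)
  rw [← padicValRat.of_int, hΦ, padicValRat_prod p _ fun d hd => zpow_ne_zero _ (hs0 d hd)]
  simp [padicValRat.of_int]

theorem pow_padicValInt_phi_add_dvd (h0 : s 0 = 0) (hs : ∀ a b, s a ∣ s (a + b) - s b)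
    (hne : ∀ n : ℕ, 0 < n → 0 < s n) {m : ℕ} (hm : 0 < m) {Φ : ℤ}
    (hΦ : (Φ : ℚ) = ∏ e ∈ m.divisors, (s e : ℚ) ^ (μ (m / e))) (hΦp : 0 < padicValInt p Φ)
    {r : ℕ} (hr : 0 < r) (hrm : r < m) :
    (p : ℤ) ^ (padicValInt p (s r) + padicValInt p Φ) ∣ s m := by
  have hv := padicValInt_phi p h0 hs hne hm hΦ
  set w := m.properDivisors.sup fun d => padicValInt p (s d)
  -- `v_p(s r) ≤ w`, because `gcd r m` is a proper divisor of `m` and `w < v_p(s m)`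
  have hproper : r.gcd m ∈ m.properDivisors := Nat.mem_properDivisors.2
    ⟨Nat.gcd_dvd_right r m, (Nat.le_of_dvd hr (Nat.gcd_dvd_left r m)).trans_lt hrm⟩
  have hgcd : padicValInt p (s (r.gcd m)) ≤ w :=
    Finset.le_sup (f := fun d => padicValInt p (s d)) hproper
  rw [padicValInt_apply_gcd p h0 hs hne hr hm] at hgcd
  exact (pow_dvd_pow _ (by omega)).trans (padicValInt_dvd (s m))

end SLucas

open Finset in
/-- Composite version of the s-Lucas theorem:
`binom(nm, km)_s ≡ binom(n,k)_{s_m} (mod Φ_m(s))`. -/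
theorem s_lucas_composite (s : ℕ → ℤ)
    (h0 : s 0 = 0)
    (hne : ∀ n : ℕ, 0 < n → 0 < s n)
    (hdvd : ∀ n k : ℕ, 0 < k → k < n → s (n - k) ∣ s n - s k)
    (m n k : ℕ) (hm : 0 < m) (hk : k ≤ n)
    (Φ : ℤ)
    (hΦ : (Φ : ℚ) = ∏ e ∈ m.divisors, (s e : ℚ) ^ (ArithmeticFunction.moebius (m / e)))
    (B B' : ℤ)
    (hB : IsSBinom s (n * m) (k * m) B)
    (hB' : IsSBinom (fun j => s (m * j)) n k B') :
    Φ ∣ B - B' := by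
  have hs := dvd_apply_add_sub h0 hdvd
  refine dvd_of_forall_pow_padicValInt_dvd (phi_ne_zero hne hΦ) fun p hp => ?_
  have : Fact p.Prime := ⟨hp⟩
  rcases (padicValInt p Φ).eq_zero_or_pos with hΦp | hΦp
  · simp [hΦp]
  have hN := relModEq_nonMultiplesProd p hs hne
    (fun r hr hrm => pow_padicValInt_phi_add_dvd p h0 hs hne hm hΦ hΦp hr hrm)
  have hNkN := (hN k).mul (hN (n - k))
  rw [← pow_add, Nat.add_sub_cancel' hk] at hNkN
  exact hNkN.pow_dvd_sub_of_mul_eq (hN n) (mul_eq_of_isSBinom hne hm hk hB hB')
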